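/- Let x* ∈ ℝⁿ with support J = supp(x*). Suppose there exists a vector c ∈ ℝⁿ such that ⟨P e_i, c⟩ = ‖P e_i‖₂ · sgn(x*_i) for every i ∈ J and |⟨P e_i, c⟩| < ‖P e_i‖₂ for every i ∉ J. Then every minimizer y of the weighted ℓ1 norm ‖W x‖₁ = Σ_{i=1}^n w_i |x_i| subject to A x = A x* satisfies, for every index k ∈ {1,…,n}: either y_k = 0 or sgn(y_k) = sgn(x*_k). In particular no source is misinterpreted as a sink or vice versa. -/

import Mathlib

open scoped RealInnerProductSpace Classical

/-! With `d = P c`, self-adjointness of `P` gives `⟪P e_i, c⟫ = d i`, so the hypotheses say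
`d i = w i * sgn x*_i` on the support of `x*` and `|d i| < w i` off it. As `d ∈ (ker A)ᗮ`, every
feasible `y` has `⟪y, d⟫ = ⟪x*, d⟫ = ‖W x*‖₁`, so for a minimiser
`‖W y‖₁ ≤ ‖W x*‖₁ = ∑ y i d i ≤ ∑ w i |y i| = ‖W y‖₁`.
Equality then holds termwise, `y i d i = w i |y i|`, which rules out `y i ≠ 0` where `|d i| < w i`
and forces `sgn y i = sgn x*_i` where `d i = w i sgn x*_i` with `w i > 0`. -/

/-- The `i`-th standard basis vector of `ℝⁿ`. -/
noncomputable def stdBasis (n : ℕ) (i : Fin n) : EuclideanSpace ℝ (Fin n) :=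
  EuclideanSpace.single i 1

/-- `P`: the orthogonal projection of `ℝⁿ` onto the orthogonal complement of `ker A`
(this equals `A†A` for the Moore–Penrose pseudoinverse `A†`). -/
noncomputable def proj {m n : ℕ} (A : EuclideanSpace ℝ (Fin n) →ₗ[ℝ] EuclideanSpace ℝ (Fin m))
    (x : EuclideanSpace ℝ (Fin n)) : EuclideanSpace ℝ (Fin n) :=
  (Submodule.orthogonalProjectionOnto (LinearMap.ker A)ᗮ x : EuclideanSpace ℝ (Fin n))

/-- The weights `w i = ‖P e_i‖₂`. -/
noncomputable def wgt {m n : ℕ} (A : EuclideanSpace ℝ (Fin n) →ₗ[ℝ] EuclideanSpace ℝ (Fin m))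
    (i : Fin n) : ℝ :=
  ‖proj A (stdBasis n i)‖

/-- The weighted ℓ¹ norm `‖W x‖₁ = ∑ i, w i * |x i|`. -/
noncomputable def wl1 {m n : ℕ} (A : EuclideanSpace ℝ (Fin n) →ₗ[ℝ] EuclideanSpace ℝ (Fin m))
    (x : EuclideanSpace ℝ (Fin n)) : ℝ :=
  ∑ i, wgt A i * |x i|

section DualCertificate

variable {ι : Type*} [Fintype ι] {w d x y : ι → ℝ}

lemma mul_le_mul_abs_of_abs_le {a b c : ℝ} (h : |b| ≤ c) : a * b ≤ c * |a| :=
  calc a * b ≤ |a| * |b| := by rw [← abs_mul]; exact le_abs_self _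
    _ ≤ |a| * c := mul_le_mul_of_nonneg_left h (abs_nonneg a)
    _ = c * |a| := mul_comm _ _

lemma sign_eq_of_mul_sign_eq_abs {a s : ℝ} (h : a * Real.sign s = |a|) (ha : a ≠ 0) :
    Real.sign a = Real.sign s := by
  have ha' : 0 < |a| := abs_pos.mpr ha
  rcases lt_trichotomy s 0 with hs | rfl | hs
  · rw [Real.sign_of_neg hs] at h ⊢
    exact Real.sign_of_neg (by linarith)
  · rw [Real.sign_zero] at h
    linarith
  · rw [Real.sign_of_pos hs] at h ⊢
    exact Real.sign_of_pos (by linarith)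

lemma mul_sign_self (a : ℝ) : a * Real.sign a = |a| := by
  rcases lt_trichotomy a 0 with ha | rfl | ha
  · rw [Real.sign_of_neg ha, abs_of_neg ha, mul_neg_one]
  · simp
  · rw [Real.sign_of_pos ha, abs_of_pos ha, mul_one]

lemma abs_mul_sign_of_ne_zero {a : ℝ} (c : ℝ) (ha : a ≠ 0) : |c * Real.sign a| = |c| := by
  rcases Real.sign_apply_eq_of_ne_zero a ha with h | h <;> simp [h]

lemma sum_mul_abs_eq_sum_mul (hd : ∀ i, x i ≠ 0 → d i = w i * Real.sign (x i)) :
    ∑ i, w i * |x i| = ∑ i, x i * d i := by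
  refine Finset.sum_congr rfl fun i _ => ?_
  by_cases hi : x i = 0
  · simp [hi]
  · rw [hd i hi, ← mul_sign_self, mul_left_comm]

lemma mul_eq_mul_abs_of_sum_le (hd : ∀ i, |d i| ≤ w i)
    (h : ∑ i, w i * |y i| ≤ ∑ i, y i * d i) (i : ι) : y i * d i = w i * |y i| := by
  have hterm : ∀ i ∈ Finset.univ, y i * d i ≤ w i * |y i| :=
    fun i _ => mul_le_mul_abs_of_abs_le (hd i)
  exact (Finset.sum_eq_sum_iff_of_le hterm).mp
    (le_antisymm (Finset.sum_le_sum hterm) h) i (Finset.mem_univ i)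

theorem sign_eq_of_dual_certificate
    (hw : ∀ i, x i ≠ 0 → 0 < w i)
    (hd₁ : ∀ i, x i ≠ 0 → d i = w i * Real.sign (x i))
    (hd₂ : ∀ i, x i = 0 → |d i| < w i)
    (hle : ∑ i, w i * |y i| ≤ ∑ i, w i * |x i|)
    (hxy : ∑ i, x i * d i = ∑ i, y i * d i) (k : ι) :
    y k = 0 ∨ Real.sign (y k) = Real.sign (x k) := by
  have hd : ∀ i, |d i| ≤ w i := by
    intro i
    by_cases hi : x i = 0
    · exact (hd₂ i hi).le
    · rw [hd₁ i hi, abs_mul_sign_of_ne_zero _ hi, abs_of_pos (hw i hi)]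
  have hyd := mul_eq_mul_abs_of_sum_le hd (by rwa [← hxy, ← sum_mul_abs_eq_sum_mul hd₁]) k
  by_cases hyk : y k = 0
  · exact Or.inl hyk
  by_cases hk : x k = 0
  · have : |y k| * |d k| < |y k| * w k := mul_lt_mul_of_pos_left (hd₂ k hk) (abs_pos.mpr hyk)
    have : y k * d k ≤ |d k| * |y k| := mul_le_mul_abs_of_abs_le le_rfl
    linarith
  · refine Or.inr (sign_eq_of_mul_sign_eq_abs (mul_left_cancel₀ (hw k hk).ne' ?_) hyk)
    rw [hd₁ k hk] at hyd
    linear_combination hyd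

end DualCertificate

section Projection

variable {m n : ℕ} (A : EuclideanSpace ℝ (Fin n) →ₗ[ℝ] EuclideanSpace ℝ (Fin m))

lemma real_inner_eq_sum_mul (x z : EuclideanSpace ℝ (Fin n)) : ⟪x, z⟫ = ∑ i, x i * z i := by
  simp [PiLp.inner_apply, mul_comm]

lemma inner_proj_stdBasis (c : EuclideanSpace ℝ (Fin n)) (i : Fin n) :
    ⟪proj A (stdBasis n i), c⟫ = proj A c i := by
  rw [proj, ← Submodule.starProjection_apply, Submodule.inner_starProjection_left_eq_right,
    stdBasis, EuclideanSpace.inner_single_left]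
  simp only [map_one, one_mul]
  rfl

lemma inner_proj_eq_of_map_eq {x y : EuclideanSpace ℝ (Fin n)} (h : A y = A x)
    (c : EuclideanSpace ℝ (Fin n)) : ⟪y, proj A c⟫ = ⟪x, proj A c⟫ := by
  have hker : y - x ∈ LinearMap.ker A := by simp [h]
  rw [← sub_eq_zero, ← inner_sub_left]
  exact Submodule.inner_right_of_mem_orthogonal hker (Submodule.coe_mem _)

lemma wgt_pos {i : Fin n} (h : stdBasis n i ∉ LinearMap.ker A) : 0 < wgt A i := by
  rw [wgt, norm_pos_iff]
  intro h0
  refine h ?_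
  rw [← Submodule.orthogonal_orthogonal (LinearMap.ker A),
    ← Submodule.orthogonalProjectionOnto_eq_zero_iff]
  exact Subtype.coe_injective h0

end Projection

theorem stmt4 {m n : ℕ}
    (A : EuclideanSpace ℝ (Fin n) →ₗ[ℝ] EuclideanSpace ℝ (Fin m))
    (hA : ∀ i, stdBasis n i ∉ LinearMap.ker A)
    (xstar c : EuclideanSpace ℝ (Fin n))
    (hc1 : ∀ i, xstar i ≠ 0 →
      ⟪proj A (stdBasis n i), c⟫ = ‖proj A (stdBasis n i)‖ * Real.sign (xstar i))
    (hc2 : ∀ i, xstar i = 0 →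
      |⟪proj A (stdBasis n i), c⟫| < ‖proj A (stdBasis n i)‖)
    (y : EuclideanSpace ℝ (Fin n)) (hfeas : A y = A xstar)
    (hmin : ∀ x : EuclideanSpace ℝ (Fin n), A x = A xstar → wl1 A y ≤ wl1 A x) :
    ∀ k, y k = 0 ∨ Real.sign (y k) = Real.sign (xstar k) := by
  intro k
  refine sign_eq_of_dual_certificate (w := wgt A) (d := proj A c) (fun i _ => wgt_pos A (hA i))
    (fun i hi => ?_) (fun i hi => ?_) (hmin xstar rfl) ?_ k
  · rw [← inner_proj_stdBasis]; exact hc1 i hi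
  · rw [← inner_proj_stdBasis]; exact hc2 i hi
  · simpa only [real_inner_eq_sum_mul] using (inner_proj_eq_of_map_eq A hfeas c).symm
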